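/- Let d ≥ 2 and n ≥ 1 be integers and r ∈ (0,1). For every α ∈ {0,…,n−1}^d and every x in the closed cube ∏_{j=1}^d [α_j/n, (α_j + r)/n], we have ‖H^r(x) − α/n‖₂ ≤ (1−r)·√d·n^{−1}, where α/n = (α_1/n, …, α_d/n) is the lower corner grid point of the cube. -/

import Mathlib

/-- `h` is affine on the interval `[a, b]`. -/
def AffineOn (h : ℝ → ℝ) (a b : ℝ) : Prop :=
  ∃ m c : ℝ, ∀ x ∈ Set.Icc a b, h x = m * x + c

/-- `h` is the continuous piecewise-linear function `h^r` from the paper. -/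
def IsHr (n : ℕ) (r : ℝ) (h : ℝ → ℝ) : Prop :=
  Continuous h ∧
  (∀ x : ℝ, x ∉ Set.Icc (0:ℝ) 1 → h x = x) ∧
  (∀ j : ℕ, j ≤ n → h ((j : ℝ) / n) = (j : ℝ) / n) ∧
  (∀ j : ℕ, j < n → h (((j : ℝ) + r) / n) = ((j : ℝ) + 1 - r) / n) ∧
  (∀ j : ℕ, j < n → AffineOn h ((j : ℝ) / n) (((j : ℝ) + r) / n)) ∧
  (∀ j : ℕ, j < n → AffineOn h (((j : ℝ) + r) / n) (((j : ℝ) + 1) / n))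

/-- The coordinatewise map `H^r : ℝ^d → ℝ^d`. -/
noncomputable def Hmap (d : ℕ) (h : ℝ → ℝ) (x : EuclideanSpace ℝ (Fin d)) :
    EuclideanSpace ℝ (Fin d) :=
  WithLp.toLp 2 (fun i => h (x i))

/-- The uniform grid point `x^α = α/n` of `[0,1]^d`. -/
noncomputable def gridPoint (d n : ℕ) (α : Fin d → Fin n) : EuclideanSpace ℝ (Fin d) :=
  WithLp.toLp 2 (fun i => (α i : ℝ) / n)

/-!
On `[j/n, (j+r)/n]` the function `h^r` is affine with endpoint values `j/n` and `(j+1-r)/n`, so it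
moves each coordinate of the cube by at most `(1-r)/n` away from `α_j/n`; summing the squares of `d`
such deviations gives the factor `√d`.
-/

open Set

theorem AffineOn.abs_sub_left_le {h : ℝ → ℝ} {a b : ℝ} (haff : AffineOn h a b) {x : ℝ}
    (hx : x ∈ Icc a b) : |h x - h a| ≤ |h b - h a| := by
  obtain ⟨m, c, hmc⟩ := haff
  have hab : a ≤ b := hx.1.trans hx.2
  rw [hmc x hx, hmc a ⟨le_rfl, hab⟩, hmc b ⟨hab, le_rfl⟩]
  calc |m * x + c - (m * a + c)| = |m| * |x - a| := by rw [← abs_mul]; ring_nf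
    _ ≤ |m| * |b - a| := by
      gcongr
      exacts [sub_nonneg.2 hx.1, hx.2]
    _ = |m * b + c - (m * a + c)| := by rw [← abs_mul]; ring_nf

theorem IsHr.abs_sub_le {n : ℕ} {r : ℝ} {h : ℝ → ℝ} (hh : IsHr n r h) {j : ℕ} (hj : j < n)
    {x : ℝ} (hx : x ∈ Icc ((j : ℝ) / n) ((j + r) / n)) : |h x - j / n| ≤ |1 - r| / n := by
  obtain ⟨-, -, hgrid, hmid, haff, -⟩ := hh
  have hdev := (haff j hj).abs_sub_left_le hx
  rw [hgrid j hj.le, hmid j hj, ← sub_div, abs_div, Nat.abs_cast] at hdev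
  rwa [show (j : ℝ) + 1 - r - j = 1 - r by ring] at hdev

theorem EuclideanSpace.norm_le_sqrt_card_mul {ι : Type*} [Fintype ι] (v : EuclideanSpace ℝ ι)
    {c : ℝ} (hc0 : 0 ≤ c) (hc : ∀ i, |v i| ≤ c) : ‖v‖ ≤ √(Fintype.card ι) * c := by
  calc ‖v‖ = √(∑ i, ‖v i‖ ^ 2) := EuclideanSpace.norm_eq v
    _ ≤ √(∑ _i : ι, c ^ 2) := by
      gcongr with i
      exact hc i
    _ = √(Fintype.card ι) * c := by
      rw [Finset.sum_const, Finset.card_univ, nsmul_eq_mul, Real.sqrt_mul (Nat.cast_nonneg _),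
        Real.sqrt_sq hc0]

theorem Hr_close_to_grid_on_subcube_general (d n : ℕ)
    (r : ℝ) (hr : r ∈ Set.Ioo (0:ℝ) 1) (h : ℝ → ℝ) (hh : IsHr n r h)
    (α : Fin d → Fin n) (x : EuclideanSpace ℝ (Fin d))
    (hx : ∀ j : Fin d, x j ∈ Set.Icc ((α j : ℝ) / n) (((α j : ℝ) + r) / n)) :
    ‖Hmap d h x - gridPoint d n α‖ ≤ (1 - r) * Real.sqrt d / n := by
  have habs : |1 - r| = 1 - r := abs_of_pos (sub_pos.2 hr.2)
  have hcoord : ∀ j, |(Hmap d h x - gridPoint d n α) j| ≤ (1 - r) / n := fun j => by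
    simpa [Hmap, gridPoint, habs] using hh.abs_sub_le (α j).2 (hx j)
  calc ‖Hmap d h x - gridPoint d n α‖ ≤ √(Fintype.card (Fin d)) * ((1 - r) / n) :=
        EuclideanSpace.norm_le_sqrt_card_mul _ (div_nonneg (sub_nonneg.2 hr.2.le) n.cast_nonneg)
          hcoord
    _ = (1 - r) * √d / n := by rw [Fintype.card_fin]; ring

/-- On each cube `∏_j [α_j/n, (α_j+r)/n]`, the map `H^r` stays within distance
`(1−r)√d/n` of the grid point `α/n`. -/
theorem Hr_close_to_grid_on_subcube (d n : ℕ) (hd : 2 ≤ d) (hn : 1 ≤ n)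
    (r : ℝ) (hr : r ∈ Set.Ioo (0:ℝ) 1) (h : ℝ → ℝ) (hh : IsHr n r h)
    (α : Fin d → Fin n) (x : EuclideanSpace ℝ (Fin d))
    (hx : ∀ j : Fin d, x j ∈ Set.Icc ((α j : ℝ) / n) (((α j : ℝ) + r) / n)) :
    ‖Hmap d h x - gridPoint d n α‖ ≤ (1 - r) * Real.sqrt d / n :=
  Hr_close_to_grid_on_subcube_general d n r hr h hh α x hx
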